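/- The projection onto the first coordinate, G_W → ℂˣ, (α1, α2) ↦ α1, is an injective group homomorphism whose image is exactly the group of N-th roots of unity in ℂˣ, where N := a1*a2 − 1. (Equivalently: for each (α1, α2) ∈ G_W one has α1^N = 1 and α2^N = 1, the value of α1 uniquely determines α2, and every N-th root of unity occurs as the first coordinate of some element of G_W.) -/

import Mathlib

/-
The first equation says `α2 = α1^(-a1)`; substituting into the second gives
`α1^(1 - a1*a2) = 1`, i.e. `α1^N = 1`. Conversely every `N`-th root of unity `α1`
together with `α2 := α1^(-a1)` solves both equations.
-/

noncomputable section

/-- The maximal group of diagonal symmetries of the two-dimensional loop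
potential `W = X1^a1 * X2 + X2^a2 * X1`. -/
def loopSymGroup (a1 a2 : ℕ) : Subgroup (ℂˣ × ℂˣ) where
  carrier := {p | (p.1 : ℂ) ^ a1 * (p.2 : ℂ) = 1 ∧ (p.2 : ℂ) ^ a2 * (p.1 : ℂ) = 1}
  one_mem' := by simp
  mul_mem' := by
    rintro ⟨x1, x2⟩ ⟨y1, y2⟩ ⟨hx1, hx2⟩ ⟨hy1, hy2⟩
    refine ⟨?_, ?_⟩
    · show ((x1 * y1 : ℂˣ) : ℂ) ^ a1 * ((x2 * y2 : ℂˣ) : ℂ) = 1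
      push_cast
      rw [mul_pow]
      calc (x1:ℂ)^a1 * (y1:ℂ)^a1 * ((x2:ℂ) * (y2:ℂ))
          = ((x1:ℂ)^a1 * x2) * ((y1:ℂ)^a1 * y2) := by ring
        _ = 1 := by rw [hx1, hy1, one_mul]
    · show ((x2 * y2 : ℂˣ) : ℂ) ^ a2 * ((x1 * y1 : ℂˣ) : ℂ) = 1
      push_cast
      rw [mul_pow]
      calc (x2:ℂ)^a2 * (y2:ℂ)^a2 * ((x1:ℂ) * (y1:ℂ))
          = ((x2:ℂ)^a2 * x1) * ((y2:ℂ)^a2 * y1) := by ring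
        _ = 1 := by rw [hx2, hy2, one_mul]
  inv_mem' := by
    rintro ⟨x1, x2⟩ ⟨h1, h2⟩
    refine ⟨?_, ?_⟩
    · show ((x1⁻¹ : ℂˣ) : ℂ) ^ a1 * ((x2⁻¹ : ℂˣ) : ℂ) = 1
      rw [Units.val_inv_eq_inv_val, Units.val_inv_eq_inv_val, inv_pow, ← mul_inv, h1, inv_one]
    · show ((x2⁻¹ : ℂˣ) : ℂ) ^ a2 * ((x1⁻¹ : ℂˣ) : ℂ) = 1
      rw [Units.val_inv_eq_inv_val, Units.val_inv_eq_inv_val, inv_pow, ← mul_inv, h2, inv_one]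

theorem pow_mul_eq_one_and_pow_mul_eq_one_iff {G : Type*} [CommGroup G] {a b N : ℕ}
    (hN : N + 1 = a * b) {x y : G} :
    x ^ a * y = 1 ∧ y ^ b * x = 1 ↔ y = (x ^ a)⁻¹ ∧ x ^ N = 1 := by
  rw [mul_eq_one_iff_eq_inv']
  refine and_congr_right fun hy => ?_
  rw [hy, inv_pow, ← pow_mul, ← hN, pow_succ, mul_inv, inv_mul_cancel_right, inv_eq_one]

theorem mem_loopSymGroup_iff {a1 a2 : ℕ} {p : ℂˣ × ℂˣ} :
    p ∈ loopSymGroup a1 a2 ↔ p.1 ^ a1 * p.2 = 1 ∧ p.2 ^ a2 * p.1 = 1 := by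
  simp only [Units.ext_iff, Units.val_mul, Units.val_pow_eq_pow_val, Units.val_one]
  rfl

theorem mem_loopSymGroup_iff_of_succ_eq {a1 a2 N : ℕ} (hN : N + 1 = a1 * a2)
    {p : ℂˣ × ℂˣ} : p ∈ loopSymGroup a1 a2 ↔ p.2 = (p.1 ^ a1)⁻¹ ∧ p.1 ^ N = 1 :=
  mem_loopSymGroup_iff.trans (pow_mul_eq_one_and_pow_mul_eq_one_iff hN)

/-- The projection onto the first coordinate `G_W → ℂˣ` is an injective group
homomorphism whose image is exactly the group of `N`-th roots of unity,
`N = a1*a2 - 1`. -/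
theorem loopSymGroup_first_proj (a1 a2 : ℕ) (ha1 : 2 ≤ a1) (ha2 : 2 ≤ a2)
    (N : ℕ) (hN : N = a1 * a2 - 1) :
    (∀ g h : loopSymGroup a1 a2,
        ((g * h : loopSymGroup a1 a2) : ℂˣ × ℂˣ).1 =
          ((g : ℂˣ × ℂˣ)).1 * ((h : ℂˣ × ℂˣ)).1) ∧
    Function.Injective (fun g : loopSymGroup a1 a2 => ((g : ℂˣ × ℂˣ)).1) ∧
    Set.range (fun g : loopSymGroup a1 a2 => ((g : ℂˣ × ℂˣ)).1) =
      {x : ℂˣ | x ^ N = 1} := by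
  have hN' : N + 1 = a1 * a2 := by
    have : 4 ≤ a1 * a2 := Nat.mul_le_mul ha1 ha2
    omega
  have mem_iff := @mem_loopSymGroup_iff_of_succ_eq a1 a2 N hN'
  refine ⟨fun _ _ => rfl, ?_, ?_⟩
  · rintro ⟨g, hg⟩ ⟨h, hh⟩ (h1 : g.1 = h.1)
    have h2 : g.2 = h.2 := by rw [(mem_iff.1 hg).1, (mem_iff.1 hh).1, h1]
    exact Subtype.ext (Prod.ext h1 h2)
  · ext x
    refine ⟨fun ⟨g, hg⟩ => hg ▸ (mem_iff.1 g.2).2, fun hx => ?_⟩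
    exact ⟨⟨(x, (x ^ a1)⁻¹), mem_iff.2 ⟨rfl, hx⟩⟩, rfl⟩

end
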